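/- arXiv:1401.0719 — 9 statements merged into one kernel-verified Lean document; each statement's English description precedes it below -/
import Mathlib

section
/- Let G be a symmetric n×n real matrix. Define the matrix-valued function Γ(u) = G·(1 − U(u)·G)⁻¹, where U(u) = diag(u_1,…,u_n), on the open set of points u ∈ ℝⁿ where 1 − U(u)·G is invertible. Then Γ(0) = G and, for every k = 1,…,n and every u in this open set, the partial derivative of Γ with respect to u_k satisfies ∂Γ/∂u_k = Γ·E_k·Γ; that is, Γ solves the basic system with initial data G. -/
/-!
Along the line `t ↦ update u k t` the matrix `1 - U G` moves affinely with velocity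
`-Eₖ G`, so its inverse has derivative `(1 - U G)⁻¹ Eₖ G (1 - U G)⁻¹`; multiplying by `G`
on the left gives `Γ Eₖ Γ`.
-/

open Matrix

-- Any norm making matrices a normed algebra would do: it only serves the chain rule.
attribute [local instance] Matrix.linftyOpNormedAddCommGroup Matrix.linftyOpNormedSpace
  Matrix.linftyOpNormedRing Matrix.linftyOpNormedAlgebra

theorem HasDerivAt.ringInverse {𝕜 R : Type*} [NontriviallyNormedField 𝕜] [NormedRing R]
    [NormedAlgebra 𝕜 R] [HasSummableGeomSeries R] {f : 𝕜 → R} {f' : R} {x : 𝕜}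
    (hf : HasDerivAt f f' x) (hx : IsUnit (f x)) :
    HasDerivAt (fun t => Ring.inverse (f t))
      (-(Ring.inverse (f x) * f' * Ring.inverse (f x))) x := by
  obtain ⟨a, ha⟩ := hx
  have hinv := hasFDerivAt_ringInverse (𝕜 := 𝕜) a
  rw [ha] at hinv
  have hcomp := hinv.comp_hasDerivAt x hf
  simp only [_root_.neg_apply, ContinuousLinearMap.mulLeftRight_apply] at hcomp
  rw [← ha, Ring.inverse_unit]
  exact hcomp

theorem HasDerivAt.matrix_apply {𝕜 m n : Type*} [RCLike 𝕜] [Fintype m] [Fintype n]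
    {f : 𝕜 → Matrix m n 𝕜} {f' : Matrix m n 𝕜} {x : 𝕜} (hf : HasDerivAt f f' x) (i : m) (j : n) :
    HasDerivAt (fun t => f t i j) (f' i j) x :=
  (entryLinearMap 𝕜 𝕜 i j).toContinuousLinearMap.hasFDerivAt.comp_hasDerivAt x hf

namespace Matrix

theorem diagonal_update {n α : Type*} [DecidableEq n] [AddCommGroup α] (d : n → α) (k : n)
    (t : α) : diagonal (Function.update d k t) = diagonal d + single k k (t - d k) := by
  ext i j
  rcases eq_or_ne i j with rfl | hij
  · rcases eq_or_ne i k with rfl | hik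
    · simp
    · simp [hik, hik.symm]
  · simp only [diagonal_apply_ne _ hij, add_apply, single_apply, zero_add]
    grind

variable {𝕜 n : Type*} [RCLike 𝕜] [Fintype n] [DecidableEq n]

theorem hasDerivAt_diagonal_update (d : n → 𝕜) (k : n) :
    HasDerivAt (fun t => diagonal (Function.update d k t)) (single k k 1) (d k) := by
  have hline := (((hasDerivAt_id (d k)).sub_const (d k)).smul_const
    (single k k (1 : 𝕜))).const_add (diagonal d)
  simp only [smul_single, smul_eq_mul, mul_one, one_smul, id] at hline
  simp only [diagonal_update]
  exact hline

theorem hasDerivAt_mul_inv_one_sub_diagonal_update_mul (G : Matrix n n 𝕜) (d : n → 𝕜) (k : n)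
    (hd : IsUnit (1 - diagonal d * G)) :
    HasDerivAt (fun t => G * (1 - diagonal (Function.update d k t) * G)⁻¹)
      (G * (1 - diagonal d * G)⁻¹ * single k k 1 * (G * (1 - diagonal d * G)⁻¹)) (d k) := by
  have hline : HasDerivAt (fun t => 1 - diagonal (Function.update d k t) * G)
      (-(single k k 1 * G)) (d k) :=
    ((hasDerivAt_diagonal_update d k).mul_const G).const_sub 1
  have hinv := (hline.ringInverse (by simpa using hd)).const_mul G
  simp only [Function.update_eq_self, neg_mul, mul_neg, neg_neg, mul_assoc,
    ← nonsing_inv_eq_ringInverse] at hinv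
  simp only [mul_assoc]
  exact hinv

end Matrix

theorem stmt1_general {n : ℕ} (G : Matrix (Fin n) (Fin n) ℝ)
    (Γ : (Fin n → ℝ) → Matrix (Fin n) (Fin n) ℝ)
    (hΓ : ∀ u : Fin n → ℝ, Γ u = G * (1 - Matrix.diagonal u * G)⁻¹) :
    Γ 0 = G ∧
      ∀ u : Fin n → ℝ, IsUnit (1 - Matrix.diagonal u * G) →
        ∀ k i j : Fin n,
          HasDerivAt (fun t : ℝ => Γ (Function.update u k t) i j)
            ((Γ u * Matrix.single k k (1 : ℝ) * Γ u) i j) (u k) := by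
  refine ⟨by simp [hΓ], fun u hu k i j => ?_⟩
  simp only [hΓ]
  exact (Matrix.hasDerivAt_mul_inv_one_sub_diagonal_update_mul G u k hu).matrix_apply i j

/-- Let `G` be a symmetric `n × n` real matrix and define
`Γ u = G * (1 - diagonal u * G)⁻¹`.  Then `Γ 0 = G` and, for every point `u`
at which `1 - diagonal u * G` is invertible, the partial derivative of each
entry of `Γ` in the `k`-th coordinate direction equals the corresponding entry
of `Γ u * Eₖ * Γ u`, where `Eₖ = stdBasisMatrix k k 1`; that is, `Γ` solves the
basic system `∂Γ/∂uₖ = Γ Eₖ Γ` with initial data `G`. -/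
theorem stmt1 {n : ℕ} (G : Matrix (Fin n) (Fin n) ℝ) (hG : G.IsSymm)
    (Γ : (Fin n → ℝ) → Matrix (Fin n) (Fin n) ℝ)
    (hΓ : ∀ u : Fin n → ℝ, Γ u = G * (1 - Matrix.diagonal u * G)⁻¹) :
    Γ 0 = G ∧
      ∀ u : Fin n → ℝ, IsUnit (1 - Matrix.diagonal u * G) →
        ∀ k i j : Fin n,
          HasDerivAt (fun t : ℝ => Γ (Function.update u k t) i j)
            ((Γ u * Matrix.single k k (1 : ℝ) * Γ u) i j) (u k) :=
  stmt1_general G Γ hΓ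
end

section
/- Let Γ(u) = (γ_ij(u)) be a smooth symmetric n×n matrix-valued function on an open subset of ℝⁿ satisfying ∂Γ/∂u_k = Γ·E_k·Γ + σ_k(u_k)·E_k for k = 1,…,n, with given smooth functions σ_1,…,σ_n of one variable. Let f_1,…,f_n be smooth functions of one variable with f_k′ > 0 everywhere, and define the symmetric matrix-valued function Γ̃(u) = (γ̃_ij(u)) by γ̃_ij(u) = γ_ij(u)/√(f_i′(u_i) f_j′(u_j)) − (f_i″(u_i)/(2 f_i′(u_i)²)) δ_ij. Then for each k = 1,…,n one has ∂Γ̃/∂u_k = f_k′(u_k)·[ Γ̃·E_k·Γ̃ + σ̃_k(u_k)·E_k ], where σ̃_k(u_k) = ( σ_k(u_k) − ½ S_{u_k}(f_k) ) / f_k′(u_k)² and S_u(f) = f‴/f′ − (3/2)(f″/f′)² is the Schwarzian derivative. (The factor f_k′(u_k) expresses the chain rule for the substitution ũ_k = f_k(u_k): in the new variables the system retains the same form with σ replaced by σ̃.) -/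
private lemma stmt3_tri {n : ℕ} (M N : Matrix (Fin n) (Fin n) ℝ) (k i j : Fin n) :
    (M * Matrix.single k k (1:ℝ) * N) i j = M i k * N k j := by
  simp only [Matrix.mul_apply, Matrix.single]
  rw [Finset.sum_eq_single k]
  · rw [Finset.sum_eq_single k] <;> simp +contextual [eq_comm]
  · intro b _ hb
    rw [Finset.sum_eq_single k] <;> simp +contextual [eq_comm, hb, Ne.symm hb]
  · simp

private lemma stmt3_derivs (f : ℝ → ℝ) (hf : ContDiff ℝ (⊤ : ℕ∞) f) (x : ℝ) :
    HasDerivAt (deriv f) (deriv (deriv f) x) x ∧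
    HasDerivAt (deriv (deriv f)) (deriv (deriv (deriv f)) x) x := by
  have h0 : ContDiff ℝ ((⊤:ℕ∞):WithTop ℕ∞) f := hf.of_le (by simp)
  have h1 : ContDiff ℝ ((⊤:ℕ∞):WithTop ℕ∞) (deriv f) := (contDiff_infty_iff_deriv.mp h0).2
  have h2 : ContDiff ℝ ((⊤:ℕ∞):WithTop ℕ∞) (deriv (deriv f)) := (contDiff_infty_iff_deriv.mp h1).2
  exact ⟨((h1.differentiable (by simp)) x).hasDerivAt,
    ((h2.differentiable (by simp)) x).hasDerivAt⟩

theorem stmt3 {n : ℕ} (Ω : Set (Fin n → ℝ)) (hΩ : IsOpen Ω)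
    (Γ Γt : (Fin n → ℝ) → Matrix (Fin n) (Fin n) ℝ)
    (σ σt : Fin n → ℝ → ℝ) (f : Fin n → ℝ → ℝ)
    (hσ : ∀ k, ContDiff ℝ (⊤ : ℕ∞) (σ k))
    (hf : ∀ k, ContDiff ℝ (⊤ : ℕ∞) (f k))
    (hf' : ∀ k x, 0 < deriv (f k) x)
    (hsymm : ∀ u ∈ Ω, (Γ u).IsSymm)
    (hsmooth : ∀ i j : Fin n, ContDiffOn ℝ (⊤ : ℕ∞) (fun u => Γ u i j) Ω)
    (hΓ : ∀ u ∈ Ω, ∀ k i j : Fin n,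
      HasDerivAt (fun t : ℝ => Γ (Function.update u k t) i j)
        ((Γ u * Matrix.single k k (1 : ℝ) * Γ u
          + σ k (u k) • Matrix.single k k (1 : ℝ)) i j) (u k))
    (hΓt : ∀ u : Fin n → ℝ, ∀ i j : Fin n,
      Γt u i j = Γ u i j / Real.sqrt (deriv (f i) (u i) * deriv (f j) (u j))
        - (deriv (deriv (f i)) (u i) / (2 * (deriv (f i) (u i)) ^ 2))
            * (if i = j then 1 else 0))
    (hσt : ∀ k x,
      σt k x = (σ k x - (1 / 2) * (deriv (deriv (deriv (f k))) x / deriv (f k) x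
          - (3 / 2) * (deriv (deriv (f k)) x / deriv (f k) x) ^ 2))
        / (deriv (f k) x) ^ 2) :
    ∀ u ∈ Ω, ∀ k i j : Fin n,
      HasDerivAt (fun t : ℝ => Γt (Function.update u k t) i j)
        (deriv (f k) (u k) *
          ((Γt u * Matrix.single k k (1 : ℝ) * Γt u
            + σt k (u k) • Matrix.single k k (1 : ℝ)) i j)) (u k) := by
  intro u hu k i j
  have apos : ∀ l, 0 < deriv (f l) (u l) := fun l => hf' l (u l)
  have hg := (stmt3_derivs (f k) (hf k) (u k)).1
  have hgg := (stmt3_derivs (f k) (hf k) (u k)).2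
  by_cases hik : i = k
  · subst hik
    by_cases hjk : j = i
    · subst hjk
      -- diagonal case i = j = k
      have hfun : (fun t : ℝ => Γt (Function.update u j t) j j) = fun t =>
          Γ (Function.update u j t) j j / deriv (f j) t
            - deriv (deriv (f j)) t / (2 * (deriv (f j) t) ^ 2) := by
        funext t
        rw [hΓt]
        simp [Real.sqrt_mul_self (hf' j t).le]
      rw [hfun]
      have h1 := (hΓ u hu j j j).div hg (ne_of_gt (apos j))
      have hden : HasDerivAt (fun t => 2 * (deriv (f j) t) ^ 2)
          (2 * (2 * deriv (f j) (u j) ^ 1 * deriv (deriv (f j)) (u j))) (u j) :=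
        (hg.pow 2).const_mul 2
      have h2 := hgg.div hden (by have := apos j; positivity)
      refine (h1.sub h2).congr_deriv (Eq.symm ?_)
      simp only [Matrix.add_apply, Matrix.smul_apply, smul_eq_mul, Function.update_eq_self]
      rw [stmt3_tri, stmt3_tri, hΓt u j j, hσt]
      simp only [Matrix.single_apply_same,
        if_pos rfl, Real.sqrt_mul_self (apos j).le, mul_one]
      have ha := apos j
      field_simp
      simp only [if_true]
      ring
    · -- i = k, j ≠ k
      have hfun : (fun t : ℝ => Γt (Function.update u i t) i j) = fun t =>
          Γ (Function.update u i t) i j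
            / Real.sqrt (deriv (f i) t * deriv (f j) (u j)) := by
        funext t
        rw [hΓt]
        simp [Function.update_of_ne hjk, if_neg (Ne.symm hjk)]
      rw [hfun]
      have hs : HasDerivAt (fun t => Real.sqrt (deriv (f i) t * deriv (f j) (u j)))
          ((deriv (deriv (f i)) (u i) * deriv (f j) (u j))
            / (2 * Real.sqrt (deriv (f i) (u i) * deriv (f j) (u j)))) (u i) :=
        (hg.mul_const _).sqrt (by have := apos i; have := apos j; positivity)
      have h1 := (hΓ u hu i i j).div hs
        (ne_of_gt (Real.sqrt_pos.mpr (by have := apos i; have := apos j; positivity)))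
      refine h1.congr_deriv (Eq.symm ?_)
      simp only [Matrix.add_apply, Matrix.smul_apply, smul_eq_mul, Function.update_eq_self]
      rw [stmt3_tri, stmt3_tri, hΓt u i i, hΓt u i j]
      simp only [Matrix.single, if_pos rfl, if_neg (Ne.symm hjk), Real.sqrt_mul_self (apos i).le,
        Real.sqrt_mul (apos i).le, mul_one, mul_zero, add_zero, and_true, and_false,
        if_true, if_false, sub_zero]
      have hne : ¬ i = j := fun h => hjk h.symm
      set p := Real.sqrt (deriv (f i) (u i)) with hpdef
      set q := Real.sqrt (deriv (f j) (u j)) with hqdef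
      have hp2 : p ^ 2 = deriv (f i) (u i) := by rw [hpdef]; exact Real.sq_sqrt (apos i).le
      have hq2 : q ^ 2 = deriv (f j) (u j) := by rw [hqdef]; exact Real.sq_sqrt (apos j).le
      have hp0 : 0 < p := by rw [hpdef]; exact Real.sqrt_pos.mpr (apos i)
      have hq0 : 0 < q := by rw [hqdef]; exact Real.sqrt_pos.mpr (apos j)
      rw [← hp2, ← hq2]
      field_simp
      simp only [Matrix.of_apply, hne, and_false, false_and, if_false, mul_zero, add_zero]
      ring
  · by_cases hjk : j = k
    · subst hjk
      -- i ≠ k, j = k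
      have hfun : (fun t : ℝ => Γt (Function.update u j t) i j) = fun t =>
          Γ (Function.update u j t) i j
            / Real.sqrt (deriv (f i) (u i) * deriv (f j) t) := by
        funext t
        rw [hΓt]
        simp [Function.update_of_ne hik, if_neg hik]
      rw [hfun]
      have hs : HasDerivAt (fun t => Real.sqrt (deriv (f i) (u i) * deriv (f j) t))
          ((deriv (f i) (u i) * deriv (deriv (f j)) (u j))
            / (2 * Real.sqrt (deriv (f i) (u i) * deriv (f j) (u j)))) (u j) :=
        (hg.const_mul _).sqrt (by have := apos i; have := apos j; positivity)
      have h1 := (hΓ u hu j i j).div hs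
        (ne_of_gt (Real.sqrt_pos.mpr (by have := apos i; have := apos j; positivity)))
      refine h1.congr_deriv (Eq.symm ?_)
      simp only [Matrix.add_apply, Matrix.smul_apply, smul_eq_mul, Function.update_eq_self]
      rw [stmt3_tri, stmt3_tri, hΓt u i j, hΓt u j j]
      simp only [Matrix.single, if_pos rfl, if_neg hik, Real.sqrt_mul_self (apos j).le,
        Real.sqrt_mul (apos i).le, mul_one, mul_zero, add_zero, and_true, and_false,
        false_and, if_true, if_false, sub_zero]
      have hne : ¬ j = i := fun h => hik h.symm
      set p := Real.sqrt (deriv (f i) (u i)) with hpdef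
      set q := Real.sqrt (deriv (f j) (u j)) with hqdef
      have hp2 : p ^ 2 = deriv (f i) (u i) := by rw [hpdef]; exact Real.sq_sqrt (apos i).le
      have hq2 : q ^ 2 = deriv (f j) (u j) := by rw [hqdef]; exact Real.sq_sqrt (apos j).le
      have hp0 : 0 < p := by rw [hpdef]; exact Real.sqrt_pos.mpr (apos i)
      have hq0 : 0 < q := by rw [hqdef]; exact Real.sqrt_pos.mpr (apos j)
      rw [← hp2, ← hq2]
      field_simp
      simp only [Matrix.of_apply, hne, and_false, false_and, if_false, mul_zero, add_zero]
      ring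
    · -- i ≠ k, j ≠ k
      have hfun : (fun t : ℝ => Γt (Function.update u k t) i j) = fun t =>
          Γ (Function.update u k t) i j
            / Real.sqrt (deriv (f i) (u i) * deriv (f j) (u j))
          - (deriv (deriv (f i)) (u i) / (2 * (deriv (f i) (u i)) ^ 2))
              * (if i = j then 1 else 0) := by
        funext t
        rw [hΓt]
        simp [Function.update_of_ne hik, Function.update_of_ne hjk]
      rw [hfun]
      have h1 := ((hΓ u hu k i j).div_const
        (Real.sqrt (deriv (f i) (u i) * deriv (f j) (u j)))).sub_const
        ((deriv (deriv (f i)) (u i) / (2 * (deriv (f i) (u i)) ^ 2))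
          * (if i = j then 1 else 0))
      refine h1.congr_deriv (Eq.symm ?_)
      simp only [Matrix.add_apply, Matrix.smul_apply, smul_eq_mul, Function.update_eq_self]
      rw [stmt3_tri, stmt3_tri, hΓt u i k, hΓt u k j]
      simp only [Matrix.single, if_neg hik, if_neg (Ne.symm hjk), Real.sqrt_mul (apos i).le,
        Real.sqrt_mul (apos k).le, mul_one, mul_zero, add_zero, and_true, and_false,
        false_and, if_true, if_false, sub_zero]
      set p := Real.sqrt (deriv (f i) (u i)) with hpdef
      set q := Real.sqrt (deriv (f j) (u j)) with hqdef
      set r := Real.sqrt (deriv (f k) (u k)) with hrdef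
      have hp2 : p ^ 2 = deriv (f i) (u i) := by rw [hpdef]; exact Real.sq_sqrt (apos i).le
      have hq2 : q ^ 2 = deriv (f j) (u j) := by rw [hqdef]; exact Real.sq_sqrt (apos j).le
      have hr2 : r ^ 2 = deriv (f k) (u k) := by rw [hrdef]; exact Real.sq_sqrt (apos k).le
      have hp0 : 0 < p := by rw [hpdef]; exact Real.sqrt_pos.mpr (apos i)
      have hq0 : 0 < q := by rw [hqdef]; exact Real.sqrt_pos.mpr (apos j)
      have hr0 : 0 < r := by rw [hrdef]; exact Real.sqrt_pos.mpr (apos k)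
      simp only [Matrix.of_apply, if_neg (show ¬(k = i ∧ k = j) from fun h => hik h.1.symm),
        mul_zero, add_zero]
      rw [← hr2]
      field_simp
end

section
/- Let Γ(u) = (γ_ij(u)) be a smooth symmetric n×n matrix-valued function on an open subset of ℝⁿ solving the basic system ∂Γ/∂u_k = Γ·E_k·Γ, k = 1,…,n. Let a_k, b_k, c_k, d_k (k = 1,…,n) be real numbers with a_k d_k − b_k c_k = 1, and suppose c_k u_k + d_k ≠ 0 on the domain. Define the symmetric matrix-valued function Γ̃(u) = (γ̃_ij(u)) by γ̃_ij(u) = (c_i u_i + d_i)(c_j u_j + d_j) γ_ij(u) + c_i (c_i u_i + d_i) δ_ij. Then for each k = 1,…,n one has (c_k u_k + d_k)² · ∂Γ̃/∂u_k = Γ̃·E_k·Γ̃; that is, in the new variables ũ_k = (a_k u_k + b_k)/(c_k u_k + d_k) the matrix Γ̃ again solves the basic system. -/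
/-- Auxiliary: entry of a product through a standard basis matrix. -/
lemma entry_aux {n : ℕ} (A B : Matrix (Fin n) (Fin n) ℝ) (k i j : Fin n) :
    (A * Matrix.single k k (1:ℝ) * B) i j = A i k * B k j := by
  simp [Matrix.mul_apply, Matrix.single, Finset.sum_ite_eq, ite_and]

/-- Let `Γ(u)` be a smooth symmetric matrix-valued function on an
open set `Ω ⊆ ℝⁿ` solving the basic system `∂Γ/∂uₖ = Γ Eₖ Γ`.  For real numbers
`aₖ, bₖ, cₖ, dₖ` with `aₖ dₖ - bₖ cₖ = 1` and `cₖ uₖ + dₖ ≠ 0` on `Ω`, define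
`γ̃_ij = (cᵢuᵢ+dᵢ)(cⱼuⱼ+dⱼ) γ_ij + cᵢ(cᵢuᵢ+dᵢ) δ_ij`.  Then
`(cₖuₖ+dₖ)² ∂Γ̃/∂uₖ = Γ̃ Eₖ Γ̃`, i.e. in the variables
`ũₖ = (aₖuₖ+bₖ)/(cₖuₖ+dₖ)` the matrix `Γ̃` again solves the basic system. -/
theorem stmt4 {n : ℕ} (Ω : Set (Fin n → ℝ)) (hΩ : IsOpen Ω)
    (Γ Γt : (Fin n → ℝ) → Matrix (Fin n) (Fin n) ℝ)
    (a b c d : Fin n → ℝ)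
    (habcd : ∀ k, a k * d k - b k * c k = 1)
    (hcd : ∀ u ∈ Ω, ∀ k : Fin n, c k * u k + d k ≠ 0)
    (hsymm : ∀ u ∈ Ω, (Γ u).IsSymm)
    (hsmooth : ∀ i j : Fin n, ContDiffOn ℝ (⊤ : ℕ∞) (fun u => Γ u i j) Ω)
    (hbasic : ∀ u ∈ Ω, ∀ k i j : Fin n,
      HasDerivAt (fun t : ℝ => Γ (Function.update u k t) i j)
        ((Γ u * Matrix.single k k (1 : ℝ) * Γ u) i j) (u k))
    (hΓt : ∀ u : Fin n → ℝ, ∀ i j : Fin n,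
      Γt u i j = (c i * u i + d i) * (c j * u j + d j) * Γ u i j
        + c i * (c i * u i + d i) * (if i = j then 1 else 0)) :
    ∀ u ∈ Ω, ∀ k i j : Fin n,
      HasDerivAt (fun t : ℝ => Γt (Function.update u k t) i j)
        (((Γt u * Matrix.single k k (1 : ℝ) * Γt u) i j)
          / (c k * u k + d k) ^ 2) (u k) := by
  intro u hu k i j
  have hk := hcd u hu k
  have h1 : HasDerivAt (fun t : ℝ => c i * (if i = k then t else u i) + d i)
      (if i = k then c i else 0) (u k) := by
    rcases eq_or_ne i k with h | h
    · subst h; simpa using ((hasDerivAt_id (u i)).const_mul (c i)).add_const (d i)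
    · simpa [h] using hasDerivAt_const (u k) (c i * u i + d i)
  have h2 : HasDerivAt (fun t : ℝ => c j * (if j = k then t else u j) + d j)
      (if j = k then c j else 0) (u k) := by
    rcases eq_or_ne j k with h | h
    · subst h; simpa using ((hasDerivAt_id (u j)).const_mul (c j)).add_const (d j)
    · simpa [h] using hasDerivAt_const (u k) (c j * u j + d j)
  have hΓ := hbasic u hu k i j
  have hF := ((h1.mul h2).mul hΓ).add
    ((h1.const_mul (c i)).mul_const (if i = j then (1:ℝ) else 0))
  have key : (fun t : ℝ => Γt (Function.update u k t) i j)
      = fun t => (c i * (if i = k then t else u i) + d i)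
          * (c j * (if j = k then t else u j) + d j)
          * Γ (Function.update u k t) i j
        + c i * (c i * (if i = k then t else u i) + d i)
          * (if i = j then 1 else 0) := by
    funext t; rw [hΓt]; simp [Function.update_apply]
  rw [key]
  refine hF.congr_deriv ?_; simp only [Pi.mul_apply]
  rw [entry_aux, entry_aux, hΓt, hΓt]
  simp only [Function.update_eq_self]
  rcases eq_or_ne i k with hik | hik <;> rcases eq_or_ne j k with hjk | hjk
  · subst hik; subst hjk; simp only [if_pos rfl, eq_self_iff_true, ↓reduceIte]; field_simp; ring
  · subst hik; simp only [if_pos rfl, eq_self_iff_true, ↓reduceIte, if_neg hjk, if_neg (Ne.symm hjk)]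
    field_simp; ring
  · subst hjk; simp only [if_pos rfl, eq_self_iff_true, ↓reduceIte, if_neg hik, if_neg (Ne.symm hik)]
    field_simp; ring
  · simp only [if_pos rfl, eq_self_iff_true, ↓reduceIte, if_neg hik, if_neg hjk, if_neg (Ne.symm hik),
      if_neg (Ne.symm hjk)]
    rcases eq_or_ne i j with hij | hij
    · subst hij; simp only [if_pos rfl, eq_self_iff_true, ↓reduceIte]; field_simp; ring
    · simp only [if_neg hij]; field_simp; ring
end

section
/- Let G be a symmetric n×n real matrix and A, B, C, D diagonal n×n real matrices with A·D − B·C = 1 (the identity matrix). Let U be a diagonal n×n real matrix and assume that 1 − U·G, C·U + D, and A + B·G are invertible. Set Ũ = (A·U + B)·(C·U + D)⁻¹ and G̃ = (C + D·G)·(A + B·G)⁻¹, and assume 1 − Ũ·G̃ is invertible. Then (C·U + D)·G·(1 − U·G)⁻¹·(C·U + D) + C·(C·U + D) = G̃·(1 − Ũ·G̃)⁻¹. In other words, the fractional linear symmetry transformation maps the solution of the basic system with initial data G to the solution with initial data G̃ = (C + D·G)·(A + B·G)⁻¹. -/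
/-!
The fractional linear map `U ↦ (A U + B)(C U + D)⁻¹` with diagonal coefficients and
`A D - B C = 1` satisfies the cross identity
`(C U + D)(A + B G) - (A U + B)(C + D G) = 1 - U G`.
Hence `1 - Ũ G̃ = (C U + D)⁻¹ (1 - U G) (A + B G)⁻¹`, and inverting this factorisation turns
`G̃ (1 - Ũ G̃)⁻¹` into `(C + D G)(1 - U G)⁻¹ (C U + D)`, which is the transformed solution.
-/

namespace Matrix

variable {n R : Type*} [Fintype n] [DecidableEq n]

theorem IsDiag.commute [CommSemiring R] {X Y : Matrix n n R} (hX : X.IsDiag) (hY : Y.IsDiag) :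
    Commute X Y := by
  rw [← hX.diagonal_diag, ← hY.diagonal_diag]
  exact commute_diagonal _ _

theorem IsDiag.mul [CommSemiring R] {X Y : Matrix n n R} (hX : X.IsDiag) (hY : Y.IsDiag) :
    (X * Y).IsDiag := by
  rw [← hX.diagonal_diag, ← hY.diagonal_diag, diagonal_mul_diagonal]
  exact isDiag_diagonal _

variable [CommRing R]

theorem commute_nonsing_inv_right {P M : Matrix n n R} (h : Commute P M) : Commute P M⁻¹ := by
  rw [nonsing_inv_eq_ringInverse]
  by_cases hM : IsUnit M
  · obtain ⟨u, rfl⟩ := hM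
    rw [Ring.inverse_unit]
    exact h.units_inv_right
  · rw [Ring.inverse_non_unit _ hM]
    exact Commute.zero_right P

theorem one_sub_mul_nonsing_inv_mul_mul_nonsing_inv {M N P Q : Matrix n n R}
    (hM : IsUnit M.det) (hN : IsUnit N.det) (hPM : Commute P M) :
    1 - P * M⁻¹ * (Q * N⁻¹) = M⁻¹ * (M * N - P * Q) * N⁻¹ := by
  rw [(commute_nonsing_inv_right hPM).eq, mul_sub, sub_mul, nonsing_inv_mul_cancel_left _ _ hM,
    mul_nonsing_inv _ hN]
  simp only [mul_assoc]

theorem mobius_cross_sub_eq_one_sub {A B C D U : Matrix n n R} (hA : A.IsDiag) (hB : B.IsDiag)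
    (hC : C.IsDiag) (hD : D.IsDiag) (hU : U.IsDiag) (hABCD : A * D - B * C = 1)
    (G : Matrix n n R) :
    (C * U + D) * (A + B * G) - (A * U + B) * (C + D * G) = 1 - U * G := by
  have hCUA : C * U * A - A * U * C = 0 := by
    rw [(hC.commute hU).eq, mul_assoc, (hC.commute hA).eq, ← mul_assoc, (hU.commute hA).eq,
      sub_self]
  have hCUB : C * U * B - A * U * D = -U := by
    rw [(hC.commute hU).eq, mul_assoc, (hC.commute hB).eq, (hA.commute hU).eq, mul_assoc,
      ← mul_sub, ← neg_sub, hABCD, mul_neg, mul_one]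
  calc (C * U + D) * (A + B * G) - (A * U + B) * (C + D * G)
      = (D * A - B * C) + (C * U * A - A * U * C) + (C * U * B - A * U * D) * G
          + (D * B - B * D) * G := by noncomm_ring
    _ = 1 - U * G := by
      rw [(hD.commute hA).eq, hABCD, hCUA, hCUB, (hD.commute hB).eq, sub_self]
      noncomm_ring

end Matrix

open Matrix

theorem stmt5_general {n : ℕ} (G A B C D U : Matrix (Fin n) (Fin n) ℝ)
    (hA : A.IsDiag) (hB : B.IsDiag) (hC : C.IsDiag) (hD : D.IsDiag)
    (hU : U.IsDiag)
    (hABCD : A * D - B * C = 1)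
    (h1 : IsUnit (1 - U * G)) (h2 : IsUnit (C * U + D)) (h3 : IsUnit (A + B * G))
    (Ut Gt : Matrix (Fin n) (Fin n) ℝ)
    (hUt : Ut = (A * U + B) * (C * U + D)⁻¹)
    (hGt : Gt = (C + D * G) * (A + B * G)⁻¹) :
    (C * U + D) * (G * (1 - U * G)⁻¹) * (C * U + D) + C * (C * U + D)
      = Gt * (1 - Ut * Gt)⁻¹ := by
  subst hUt hGt
  rw [isUnit_iff_isUnit_det] at h1 h2 h3
  have hcomm : Commute (A * U + B) (C * U + D) :=
    ((hA.mul hU).add hB).commute ((hC.mul hU).add hD)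
  have hfactor : (1 - (A * U + B) * (C * U + D)⁻¹ * ((C + D * G) * (A + B * G)⁻¹))⁻¹
      = (A + B * G) * (1 - U * G)⁻¹ * (C * U + D) := by
    rw [one_sub_mul_nonsing_inv_mul_mul_nonsing_inv h2 h3 hcomm,
      mobius_cross_sub_eq_one_sub hA hB hC hD hU hABCD, Matrix.mul_inv_rev, Matrix.mul_inv_rev,
      nonsing_inv_nonsing_inv _ h2, nonsing_inv_nonsing_inv _ h3, mul_assoc]
  calc (C * U + D) * (G * (1 - U * G)⁻¹) * (C * U + D) + C * (C * U + D)
      = ((C * U + D) * G + C * (1 - U * G)) * (1 - U * G)⁻¹ * (C * U + D) := by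
        rw [add_mul ((C * U + D) * G), mul_assoc C, mul_nonsing_inv _ h1, mul_one]
        noncomm_ring
    _ = (C + D * G) * (1 - U * G)⁻¹ * (C * U + D) := by
        congr 2
        noncomm_ring
    _ = (C + D * G) * (A + B * G)⁻¹ * ((A + B * G) * (1 - U * G)⁻¹ * (C * U + D)) := by
        simp only [mul_assoc, nonsing_inv_mul_cancel_left _ _ h3]
    _ = _ := by rw [hfactor]

/-- Let `G` be symmetric, `A, B, C, D` diagonal with `A D - B C = 1`,
`U` diagonal, and assume `1 - U G`, `C U + D`, `A + B G` invertible.  With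
`Ũ = (A U + B)(C U + D)⁻¹` and `G̃ = (C + D G)(A + B G)⁻¹`, and `1 - Ũ G̃`
invertible, the fractional linear symmetry transformation maps the solution of
the basic system with initial data `G` to the one with initial data `G̃`:
`(C U + D) Γ (C U + D) + C (C U + D) = G̃ (1 - Ũ G̃)⁻¹` where `Γ = G (1 - U G)⁻¹`. -/
theorem stmt5 {n : ℕ} (G A B C D U : Matrix (Fin n) (Fin n) ℝ)
    (hG : G.IsSymm) (hA : A.IsDiag) (hB : B.IsDiag) (hC : C.IsDiag) (hD : D.IsDiag)
    (hU : U.IsDiag)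
    (hABCD : A * D - B * C = 1)
    (h1 : IsUnit (1 - U * G)) (h2 : IsUnit (C * U + D)) (h3 : IsUnit (A + B * G))
    (Ut Gt : Matrix (Fin n) (Fin n) ℝ)
    (hUt : Ut = (A * U + B) * (C * U + D)⁻¹)
    (hGt : Gt = (C + D * G) * (A + B * G)⁻¹)
    (h4 : IsUnit (1 - Ut * Gt)) :
    (C * U + D) * (G * (1 - U * G)⁻¹) * (C * U + D) + C * (C * U + D)
      = Gt * (1 - Ut * Gt)⁻¹ :=
  stmt5_general G A B C D U hA hB hC hD hU hABCD h1 h2 h3 Ut Gt hUt hGt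
end

section
/- Let A, B, C, D be diagonal n×n real matrices with A·D − B·C = 1 (the identity matrix), and let G be a symmetric n×n real matrix such that A + B·G is invertible. Then A + G·B is also invertible, the identity (C + D·G)·(A + B·G)⁻¹ = (A + G·B)⁻¹·(C + G·D) holds, and consequently the matrix G̃ = (C + D·G)·(A + B·G)⁻¹ is symmetric. -/
open Matrix

theorem Matrix.IsDiag.commute_s6 {n R : Type*} [Fintype n] [DecidableEq n] [CommRing R]
    {A B : Matrix n n R} (hA : A.IsDiag) (hB : B.IsDiag) : Commute A B :=
  hA.diagonal_diag ▸ hB.diagonal_diag ▸ commute_diagonal _ _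

/-- The coefficient conditions make `[[A, B], [C, D]]` act on symmetric `G` like a symplectic
matrix on a Lagrangian graph: the two ways of writing `G ↦ (C + D G)(A + B G)⁻¹` agree. -/
theorem add_mul_mul_add_mul_comm_of_sub_eq_one {R : Type*} [Ring R] {A B C D : R} (G : R)
    (hAC : Commute A C) (hBD : Commute B D) (hADCB : A * D - C * B = 1)
    (hDABC : D * A - B * C = 1) :
    (A + G * B) * (C + D * G) = (C + G * D) * (A + B * G) := by
  have hdiff : (A + G * B) * (C + D * G) - (C + G * D) * (A + B * G)
      = (A * C - C * A) + (A * D - C * B) * G - G * (D * A - B * C) + G * (B * D - D * B) * G := by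
    noncomm_ring
  rw [← sub_eq_zero, hdiff, hAC.eq, hBD.eq, hADCB, hDABC]
  noncomm_ring

theorem Matrix.mul_nonsing_inv_eq_nonsing_inv_mul {n R : Type*} [Fintype n] [DecidableEq n]
    [CommRing R] {P Q X Y : Matrix n n R} (hP : IsUnit P) (hQ : IsUnit Q) (h : Q * X = Y * P) :
    X * P⁻¹ = Q⁻¹ * Y := by
  rw [isUnit_iff_isUnit_det] at hP hQ
  calc X * P⁻¹ = Q⁻¹ * (Q * X) * P⁻¹ := by rw [nonsing_inv_mul_cancel_left _ _ hQ]
    _ = Q⁻¹ * Y := by rw [h, ← Matrix.mul_assoc, mul_nonsing_inv_cancel_right _ _ hP]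

theorem Matrix.transpose_add_mul_of_isSymm {n R : Type*} [Fintype n] [CommRing R]
    {A B G : Matrix n n R} (hA : A.IsSymm) (hB : B.IsSymm) (hG : G.IsSymm) :
    (A + B * G)ᵀ = A + G * B := by
  rw [transpose_add, transpose_mul, hA.eq, hB.eq, hG.eq]

/-- Let `A, B, C, D` be diagonal matrices with `A D - B C = 1` and
`G` a symmetric matrix such that `A + B G` is invertible.  Then `A + G B` is also
invertible, `(C + D G)(A + B G)⁻¹ = (A + G B)⁻¹ (C + G D)`, and consequently
`G̃ = (C + D G)(A + B G)⁻¹` is symmetric. -/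
theorem stmt6 {n : ℕ} (A B C D G : Matrix (Fin n) (Fin n) ℝ)
    (hA : A.IsDiag) (hB : B.IsDiag) (hC : C.IsDiag) (hD : D.IsDiag)
    (hG : G.IsSymm)
    (hABCD : A * D - B * C = 1)
    (h : IsUnit (A + B * G)) :
    IsUnit (A + G * B) ∧
      (C + D * G) * (A + B * G)⁻¹ = (A + G * B)⁻¹ * (C + G * D) ∧
      ((C + D * G) * (A + B * G)⁻¹).IsSymm := by
  have hT : (A + B * G)ᵀ = A + G * B := transpose_add_mul_of_isSymm hA.isSymm hB.isSymm hG
  have hunit : IsUnit (A + G * B) := hT ▸ (isUnit_transpose _).mpr h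
  have hcross : (A + G * B) * (C + D * G) = (C + G * D) * (A + B * G) :=
    add_mul_mul_add_mul_comm_of_sub_eq_one G (hA.commute_s6 hC) (hB.commute_s6 hD)
      (by rw [← (hB.commute_s6 hC).eq, hABCD])
      (by rw [← (hA.commute_s6 hD).eq, hABCD])
  have heq := mul_nonsing_inv_eq_nonsing_inv_mul h hunit hcross
  refine ⟨hunit, heq, ?_⟩
  rw [IsSymm, transpose_mul, transpose_nonsing_inv, hT, heq,
    transpose_add_mul_of_isSymm hC.isSymm hD.isSymm hG]
end

section
/- Let G be a symmetric n×n real matrix such that G² = Δ is a diagonal matrix, Δ = diag(Δ_1,…,Δ_n). If i and j are indices with Δ_i ≠ Δ_j, then the (i,j) entry of G vanishes, g_ij = 0; moreover, for every diagonal matrix U with 1 − U·G invertible, the (i,j) entry of Γ = G·(1 − U·G)⁻¹ also vanishes. In particular, if the entries Δ_1,…,Δ_n are not all equal, then the solution Γ(u) = G·(1 − U(u)·G)⁻¹ of the basic system is reducible into blocks according to the distinct values of Δ. -/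
/-!
`G` commutes with `G * G = diagonal Δ`, and a matrix commuting with `diagonal Δ` has vanishing
`(i, j)` entry whenever `Δ i ≠ Δ j`. A diagonal `U` commutes with `diagonal Δ` as well, hence so do
`1 - U * G`, its inverse, and `G * (1 - U * G)⁻¹`.
-/

namespace Matrix

variable {n R : Type*} [Fintype n] [DecidableEq n]

theorem apply_eq_zero_of_commute_diagonal [CommRing R] [NoZeroDivisors R] {A : Matrix n n R}
    {d : n → R} (h : Commute A (diagonal d)) {i j : n} (hij : d i ≠ d j) : A i j = 0 := by
  have hentry := congr_fun₂ h.eq i j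
  rw [mul_diagonal, diagonal_mul] at hentry
  have hprod : A i j * (d j - d i) = 0 := by rw [mul_sub, hentry, mul_comm, sub_self]
  exact (mul_eq_zero.mp hprod).resolve_right (sub_ne_zero.mpr hij.symm)

theorem IsDiag.commute_s10 [CommSemiring R] {A B : Matrix n n R} (hA : A.IsDiag) (hB : B.IsDiag) :
    Commute A B := by
  rw [← hA.diagonal_diag, ← hB.diagonal_diag]
  exact commute_diagonal _ _

theorem _root_.Commute.nonsing_inv_left [CommRing R] {A B : Matrix n n R} (h : Commute A B) :
    Commute A⁻¹ B := by
  by_cases hA : IsUnit A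
  · obtain ⟨u, rfl⟩ := hA
    rw [← coe_units_inv]
    exact h.units_inv_left
  · rw [nonsing_inv_apply_not_isUnit A (mt (isUnit_iff_isUnit_det A).mpr hA)]
    exact Commute.zero_left B

end Matrix

theorem stmt10_general {n : ℕ} (G : Matrix (Fin n) (Fin n) ℝ)
    (Δ : Fin n → ℝ) (hG2 : G * G = Matrix.diagonal Δ)
    (i j : Fin n) (hij : Δ i ≠ Δ j) :
    G i j = 0 ∧
      ∀ U : Matrix (Fin n) (Fin n) ℝ, U.IsDiag → IsUnit (1 - U * G) →
        (G * (1 - U * G)⁻¹) i j = 0 := by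
  have hG : Commute G (Matrix.diagonal Δ) := hG2 ▸ (Commute.refl G).mul_right (Commute.refl G)
  refine ⟨Matrix.apply_eq_zero_of_commute_diagonal hG hij, fun U hU _ => ?_⟩
  have hUΔ : Commute U (Matrix.diagonal Δ) := hU.commute_s10 (Matrix.isDiag_diagonal Δ)
  have hA : Commute (1 - U * G) (Matrix.diagonal Δ) :=
    (Commute.one_left _).sub_left (hUΔ.mul_left hG)
  exact Matrix.apply_eq_zero_of_commute_diagonal (hG.mul_left hA.nonsing_inv_left) hij

/-- Let `G` be a symmetric matrix with `G² = diagonal Δ`.  If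
`Δ i ≠ Δ j` then `G i j = 0`, and moreover for every diagonal `U` with `1 - U G`
invertible the `(i,j)` entry of `Γ = G (1 - U G)⁻¹` also vanishes; thus if the
`Δ k` are not all equal, the solution `Γ(u)` of the basic system is reducible
into blocks according to the distinct values of `Δ`. -/
theorem stmt10 {n : ℕ} (G : Matrix (Fin n) (Fin n) ℝ) (hG : G.IsSymm)
    (Δ : Fin n → ℝ) (hG2 : G * G = Matrix.diagonal Δ)
    (i j : Fin n) (hij : Δ i ≠ Δ j) :
    G i j = 0 ∧
      ∀ U : Matrix (Fin n) (Fin n) ℝ, U.IsDiag → IsUnit (1 - U * G) →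
        (G * (1 - U * G)⁻¹) i j = 0 :=
  stmt10_general G Δ hG2 i j hij
end

section
/- For u = (u_1,…,u_n) ∈ ℝⁿ set D(u) = Σ_{k=1}^n e^{−u_k}, and for i ≠ j define γ_ij(u) = e^{−(u_i + u_j)/2} / D(u). Then these functions satisfy the Darboux–Egorov equations: ∂γ_ij/∂u_k = γ_ik·γ_kj for pairwise distinct i, j, k, and Σ_{k=1}^n ∂γ_ij/∂u_k = 0 for all i ≠ j. -/
/-!
Since `log γ_ij = -(u_i + u_j)/2 - log D`, differentiating in `u_k` gives
`∂γ_ij/∂u_k = γ_ij (e^{-u_k}/D - (δ_ki + δ_kj)/2)`. For `k ∉ {i, j}` this is `γ_ik γ_kj`,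
because `e^{-(u_i+u_k)/2} e^{-(u_k+u_j)/2} = e^{-(u_i+u_j)/2} e^{-u_k}`; summing over `k` gives
`γ_ij (D/D - 1) = 0`.
-/

open Real Finset

namespace DarbouxEgorov

variable {ι : Type*} [Fintype ι]

noncomputable def expSum (u : ι → ℝ) : ℝ := ∑ k, exp (-u k)

noncomputable def rotationCoeff (u : ι → ℝ) (i j : ι) : ℝ :=
  exp (-(u i + u j) / 2) / expSum u

lemma expSum_pos (u : ι → ℝ) (i : ι) : 0 < expSum u :=
  sum_pos (fun k _ => exp_pos (-u k)) ⟨i, mem_univ i⟩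

lemma rotationCoeff_mul_rotationCoeff (u : ι → ℝ) (i j k : ι) :
    rotationCoeff u i k * rotationCoeff u k j = rotationCoeff u i j * (exp (-u k) / expSum u) := by
  have hexp : exp (-(u i + u k) / 2) * exp (-(u k + u j) / 2)
      = exp (-(u i + u j) / 2) * exp (-u k) := by
    rw [← exp_add, ← exp_add]; ring_nf
  simp only [rotationCoeff, div_mul_div_comm, hexp]

lemma hasDerivAt_rotationCoeff_comp {c : ℝ → ι → ℝ} {c' : ι → ℝ} {t : ℝ}
    (hc : HasDerivAt c c' t) (i j : ι) :
    HasDerivAt (fun s => rotationCoeff (c s) i j)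
      (rotationCoeff (c t) i j *
        ((∑ l, exp (-c t l) * c' l) / expSum (c t) - (c' i + c' j) / 2)) t := by
  have hcoord : ∀ l, HasDerivAt (fun s => c s l) (c' l) t := hasDerivAt_pi.mp hc
  have hnum : HasDerivAt (fun s => exp (-(c s i + c s j) / 2))
      (exp (-(c t i + c t j) / 2) * (-(c' i + c' j) / 2)) t :=
    (((hcoord i).add (hcoord j)).neg.div_const 2).exp
  have hden : HasDerivAt (fun s => expSum (c s)) (∑ l, exp (-c t l) * -c' l) t :=
    HasDerivAt.fun_sum fun l _ => (hcoord l).neg.exp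
  have hD : expSum (c t) ≠ 0 := (expSum_pos (c t) i).ne'
  refine (hnum.fun_div hden hD).congr_deriv ?_
  simp only [rotationCoeff, mul_neg, sum_neg_distrib]
  field_simp
  ring

variable [DecidableEq ι]

noncomputable def rotationCoeffPartial (u : ι → ℝ) (i j k : ι) : ℝ :=
  rotationCoeff u i j *
    (exp (-u k) / expSum u - ((if k = i then 1 else 0) + (if k = j then 1 else 0)) / 2)

lemma hasDerivAt_rotationCoeff_update (u : ι → ℝ) (i j k : ι) :
    HasDerivAt (fun t => rotationCoeff (Function.update u k t) i j)
      (rotationCoeffPartial u i j k) (u k) := by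
  simpa [rotationCoeffPartial, Pi.single_apply, eq_comm (a := k)] using
    hasDerivAt_rotationCoeff_comp (hasDerivAt_update u k (u k)) i j

lemma rotationCoeffPartial_of_ne (u : ι → ℝ) {i j k : ι} (hki : k ≠ i) (hkj : k ≠ j) :
    rotationCoeffPartial u i j k = rotationCoeff u i k * rotationCoeff u k j := by
  simp [rotationCoeffPartial, rotationCoeff_mul_rotationCoeff, hki, hkj]

lemma sum_rotationCoeffPartial (u : ι → ℝ) (i j : ι) :
    ∑ k, rotationCoeffPartial u i j k = 0 := by
  have hsum : ∑ k, exp (-u k) / expSum u = 1 := by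
    rw [← sum_div]; exact div_self (expSum_pos u i).ne'
  simp only [rotationCoeffPartial, ← mul_sum, sum_sub_distrib, hsum, ← sum_div, sum_add_distrib,
    sum_ite_eq', mem_univ, if_true]
  ring

end DarbouxEgorov

open DarbouxEgorov in
/-- With `D(u) = ∑ₖ e^{-uₖ}` and, for `i ≠ j`,
`γ_ij(u) = e^{-(uᵢ+uⱼ)/2} / D(u)`, the Darboux–Egorov equations hold:
`∂γ_ij/∂uₖ = γ_ik γ_kj` for pairwise distinct `i, j, k`, and
`∑ₖ ∂γ_ij/∂uₖ = 0` for all `i ≠ j`. -/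
theorem stmt14 {n : ℕ} (γ : (Fin n → ℝ) → Fin n → Fin n → ℝ)
    (hγ : ∀ u : Fin n → ℝ, ∀ i j : Fin n, i ≠ j →
      γ u i j = Real.exp (-(u i + u j) / 2) / ∑ k, Real.exp (-u k)) :
    ∀ u : Fin n → ℝ, ∀ i j : Fin n, i ≠ j →
      ∃ D : Fin n → ℝ,
        (∀ k : Fin n,
          HasDerivAt (fun t : ℝ => γ (Function.update u k t) i j) (D k) (u k)) ∧
        (∀ k : Fin n, k ≠ i → k ≠ j → D k = γ u i k * γ u k j) ∧
        ∑ k, D k = 0 := by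
  intro u i j hij
  have hγ_eq : ∀ v i j, i ≠ j → γ v i j = rotationCoeff v i j := hγ
  refine ⟨rotationCoeffPartial u i j, fun k => ?_, fun k hki hkj => ?_,
    sum_rotationCoeffPartial u i j⟩
  · simpa only [hγ_eq _ _ _ hij] using hasDerivAt_rotationCoeff_update u i j k
  · rw [hγ_eq u i k hki.symm, hγ_eq u k j hkj, rotationCoeffPartial_of_ne u hki hkj]
end

section
/- For u = (u_1,…,u_n) ∈ ℝⁿ set D(u) = Σ_{k=1}^n e^{−u_k}, define ψ_ii(u) = 2e^{−u_i}/D(u) − 1 and ψ_ij(u) = 2e^{−(u_i+u_j)/2}/D(u) for i ≠ j, and define Ω_ij(u) = u_i·δ_ij + 4e^{−(u_i+u_j)/2}/D(u). Then for all indices i, j, k one has ∂Ω_ij/∂u_k = ψ_ki(u)·ψ_kj(u); that is, dΩ_ij = Σ_{k=1}^n ψ_ki ψ_kj du_k, so Ω is the matrix of second derivatives of the corresponding WDVV potential. -/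
/-!
Put `a_l = e^{-u_l/2}` and `D = ∑ a_l²`, so that `ψ = 2 a aᵀ / D - I` and
`Ω = diag u + 4 a aᵀ / D`. Along any differentiable curve `u(t)` one has `ȧ_l = -u̇_l a_l / 2`
and `Ḋ = -∑ u̇_l a_l²`, and the quotient rule turns `d/dt Ω_ij` into `∑_k u̇_k ψ_ki ψ_kj`,
i.e. `dΩ_ij = ∑_k ψ_ki ψ_kj du_k`. The partial derivative is the case of a coordinate line.
-/

open Real Finset Function

lemma exp_neg_add_div_two (x y : ℝ) : exp (-(x + y) / 2) = exp (-x / 2) * exp (-y / 2) := by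
  rw [← exp_add]; ring_nf

lemma exp_neg_eq_sq (x : ℝ) : exp (-x) = exp (-x / 2) ^ 2 := by
  rw [sq, ← exp_add]; ring_nf

section

variable {ι : Type*} [Fintype ι] {γ : ℝ → ι → ℝ} {γ' : ι → ℝ} {t : ℝ}

noncomputable def expSum (u : ι → ℝ) : ℝ := ∑ k, exp (-u k)

lemma expSum_pos (u : ι → ℝ) (i : ι) : 0 < expSum u :=
  have : Nonempty ι := ⟨i⟩
  sum_pos (fun k _ => exp_pos (-u k)) univ_nonempty

lemma HasDerivAt.expSum (hγ : HasDerivAt γ γ' t) :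
    HasDerivAt (fun s => expSum (γ s)) (-∑ k, γ' k * Real.exp (-γ t k)) t := by
  have hterm (k : ι) :
      HasDerivAt (fun s => Real.exp (-γ s k)) (-(γ' k * Real.exp (-γ t k))) t := by
    convert (hasDerivAt_pi.mp hγ k).fun_neg.exp using 1; ring
  rw [← sum_neg_distrib]
  exact HasDerivAt.fun_sum fun k _ => hterm k

variable [DecidableEq ι]

noncomputable def wdvvPsi (u : ι → ℝ) (i j : ι) : ℝ :=
  2 * exp (-(u i + u j) / 2) / expSum u - if i = j then 1 else 0

noncomputable def wdvvOmega (u : ι → ℝ) (i j : ι) : ℝ :=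
  u i * (if i = j then 1 else 0) + 4 * exp (-(u i + u j) / 2) / expSum u

lemma wdvvPsi_eq_ite (u : ι → ℝ) (i j : ι) :
    wdvvPsi u i j = if i = j then 2 * exp (-u i) / expSum u - 1
      else 2 * exp (-(u i + u j) / 2) / expSum u := by
  split_ifs with h
  · subst h; rw [wdvvPsi, if_pos rfl, show -(u i + u i) / 2 = -u i by ring]
  · simp [wdvvPsi, h]

lemma mul_wdvvPsi_mul_wdvvPsi (u v : ι → ℝ) (i j k : ι) :
    v k * wdvvPsi u k i * wdvvPsi u k j =
      4 * exp (-(u i + u j) / 2) * (v k * exp (-u k)) / expSum u ^ 2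
        - (if k = i then 2 * v i * exp (-(u i + u j) / 2) / expSum u else 0)
        - (if k = j then 2 * v j * exp (-(u i + u j) / 2) / expSum u else 0)
        + (if k = i then v i * (if i = j then 1 else 0) else 0) := by
  rcases eq_or_ne k i with rfl | hki <;> rcases eq_or_ne k j with rfl | hkj <;>
    simp only [wdvvPsi, if_pos, if_neg, *, not_false_eq_true, exp_neg_add_div_two,
      exp_neg_eq_sq (u k)] <;>
    ring

lemma sum_mul_wdvvPsi_mul_wdvvPsi (u v : ι → ℝ) (i j : ι) :
    ∑ k, v k * wdvvPsi u k i * wdvvPsi u k j =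
      4 * exp (-(u i + u j) / 2) * (∑ k, v k * exp (-u k)) / expSum u ^ 2
        - 2 * (v i + v j) * exp (-(u i + u j) / 2) / expSum u
        + v i * (if i = j then 1 else 0) := by
  simp only [mul_wdvvPsi_mul_wdvvPsi, sum_add_distrib, sum_sub_distrib, sum_ite_eq',
    mem_univ, if_true, ← sum_div, ← mul_sum]
  ring

theorem HasDerivAt.wdvvOmega (hγ : HasDerivAt γ γ' t) (i j : ι) :
    HasDerivAt (fun s => wdvvOmega (γ s) i j)
      (∑ k, γ' k * wdvvPsi (γ t) k i * wdvvPsi (γ t) k j) t := by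
  have hcoord := hasDerivAt_pi.mp hγ
  have hdiag : HasDerivAt (fun s => γ s i * (if i = j then 1 else 0))
      (γ' i * (if i = j then 1 else 0)) t := (hcoord i).mul_const _
  have hnum : HasDerivAt (fun s => 4 * Real.exp (-(γ s i + γ s j) / 2))
      (4 * (Real.exp (-(γ t i + γ t j) / 2) * (-(γ' i + γ' j) / 2))) t :=
    ((((hcoord i).add (hcoord j)).neg.div_const 2).exp).const_mul 4
  refine (hdiag.add (hnum.div hγ.expSum (expSum_pos (γ t) i).ne')).congr_deriv ?_
  rw [sum_mul_wdvvPsi_mul_wdvvPsi]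
  field_simp
  ring

end

/-- With `D(u) = ∑ₖ e^{-uₖ}`, `ψ_ii = 2e^{-uᵢ}/D - 1`,
`ψ_ij = 2e^{-(uᵢ+uⱼ)/2}/D` for `i ≠ j`, and
`Ω_ij = uᵢ δ_ij + 4 e^{-(uᵢ+uⱼ)/2}/D`, one has `∂Ω_ij/∂uₖ = ψ_ki ψ_kj` for all
`i, j, k`; i.e. `dΩ_ij = ∑ₖ ψ_ki ψ_kj duₖ`, so `Ω` is the matrix of second
derivatives of the corresponding WDVV potential. -/
theorem stmt17 {n : ℕ} (ψ Ω : (Fin n → ℝ) → Fin n → Fin n → ℝ)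
    (hψ : ∀ u : Fin n → ℝ, ∀ i j : Fin n,
      ψ u i j =
        if i = j then 2 * Real.exp (-u i) / (∑ k, Real.exp (-u k)) - 1
        else 2 * Real.exp (-(u i + u j) / 2) / ∑ k, Real.exp (-u k))
    (hΩ : ∀ u : Fin n → ℝ, ∀ i j : Fin n,
      Ω u i j = u i * (if i = j then 1 else 0)
        + 4 * Real.exp (-(u i + u j) / 2) / ∑ k, Real.exp (-u k)) :
    ∀ u : Fin n → ℝ, ∀ i j k : Fin n,
      HasDerivAt (fun t : ℝ => Ω (Function.update u k t) i j)
        (ψ u k i * ψ u k j) (u k) := by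
  intro u i j k
  obtain rfl : ψ = wdvvPsi := funext fun u => funext fun i => funext fun j =>
    (hψ u i j).trans (wdvvPsi_eq_ite u i j).symm
  obtain rfl : Ω = wdvvOmega := funext fun u => funext fun i => funext fun j => hΩ u i j
  have h := (hasDerivAt_update u k (u k)).wdvvOmega i j
  simpa only [update_eq_self, Pi.single_apply, ite_mul, one_mul, zero_mul, sum_ite_eq',
    mem_univ, if_true] using h
end

section
/- For u = (u_1,…,u_n) ∈ ℝⁿ set D(u) = Σ_{k=1}^n e^{−u_k} and γ_ij(u) = e^{−(u_i+u_j)/2}/D(u) for i ≠ j. For a real number z with |z| < 1/2, define the n×n matrix-valued function Ψ(u,z) by Ψ_iα(u,z) = (2e^{z u_α}/√(1 − 4z²))·[ (z − ½)·δ_iα + e^{−(u_i+u_α)/2}/D(u) ]. Then: (i) for every fixed α and all i ≠ j, ∂Ψ_iα/∂u_j = γ_ij·Ψ_jα; (ii) for every i and α, Σ_{k=1}^n ∂Ψ_iα/∂u_k = z·Ψ_iα; and (iii) the normalization Σ_{α=1}^n Ψ_iα(u,−z)·Ψ_jα(u,z) = δ_ij holds for all i, j. -/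
/-!
Write `p_k = e^{-u_k/2}`, so that `D = ∑ p_k²` and `e^{-(u_i+u_α)/2}/D = p_i p_α / D` is the
matrix `P` of the orthogonal projection onto `p`. Then `Ψ(u,z) = c(z) ((z - ½) I + P) diag(e^{z u_α})`
with `c(z) = 2/√(1-4z²)`, and since `P² = P`,
`((-z - ½) I + P)((z - ½) I + P) = (¼ - z²) I`, which `c(z) c(-z) = 4/(1-4z²)` normalises to `I`.
For the derivatives, `∂_k log(p_i p_α / D) = e^{-u_k}/D - (δ_ik + δ_αk)/2`, which sums to `0` over `k`;
for `k ≠ i` it turns `∂_k Ψ_iα` into `γ_ik Ψ_kα`.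
-/

open Real Finset Function

namespace WaveFunction

lemma hasDerivAt_update_apply {𝕜 ι : Type*} [NontriviallyNormedField 𝕜] [DecidableEq ι]
    (u : ι → 𝕜) (k m : ι) :
    HasDerivAt (fun t => update u k t m) (if m = k then 1 else 0) (u k) := by
  simpa [Pi.single_apply] using hasDerivAt_pi.mp (hasDerivAt_update u k (u k)) m

lemma exp_neg_add_div_two (x y : ℝ) : exp (-(x + y) / 2) = exp (-x / 2) * exp (-y / 2) := by
  rw [← exp_add]
  ring_nf

lemma exp_neg_eq_mul_self_half (x : ℝ) : exp (-x) = exp (-x / 2) * exp (-x / 2) := by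
  rw [← exp_add]
  ring_nf

lemma sum_delta_add_outer_mul {ι K : Type*} [Fintype ι] [DecidableEq ι] [Field K]
    (p : ι → K) {S : K} (hS : ∑ α, p α * p α = S) (hS0 : S ≠ 0) (a b : K) (i j : ι) :
    ∑ α, (a * (if i = α then 1 else 0) + p i * p α / S) *
        (b * (if j = α then 1 else 0) + p j * p α / S) =
      a * b * (if i = j then 1 else 0) + (a + b + 1) * (p i * p j / S) := by
  have hexpand : ∀ α, (a * (if i = α then 1 else 0) + p i * p α / S) *
        (b * (if j = α then 1 else 0) + p j * p α / S) =
      a * b * ((if i = α then 1 else 0) * (if j = α then 1 else 0))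
        + a * p j / S * ((if i = α then 1 else 0) * p α)
        + b * p i / S * ((if j = α then 1 else 0) * p α)
        + p i * p j / S ^ 2 * (p α * p α) := fun α => by ring
  simp only [hexpand, sum_add_distrib, ← mul_sum, hS]
  simp only [ite_mul, one_mul, zero_mul, sum_ite_eq, mem_univ, if_true]
  simp_rw [eq_comm (a := j)]
  field_simp
  ring

variable {ι : Type*} [Fintype ι]

lemma sum_exp_neg_pos [Nonempty ι] (u : ι → ℝ) : 0 < ∑ k, exp (-u k) :=
  sum_pos (fun _ _ => exp_pos _) univ_nonempty

variable [DecidableEq ι]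

noncomputable def wave (z : ℝ) (u : ι → ℝ) (i α : ι) : ℝ :=
  2 * exp (z * u α) / √(1 - 4 * z ^ 2) *
    ((z - 1 / 2) * (if i = α then 1 else 0) + exp (-(u i + u α) / 2) / ∑ k, exp (-u k))

noncomputable def partialWave (z : ℝ) (u : ι → ℝ) (i α k : ι) : ℝ :=
  z * (if α = k then 1 else 0) * wave z u i α +
    2 * exp (z * u α) / √(1 - 4 * z ^ 2) * (exp (-(u i + u α) / 2) / ∑ m, exp (-u m)) *
      (exp (-u k) / ∑ m, exp (-u m) - ((if i = k then 1 else 0) + (if α = k then 1 else 0)) / 2)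

lemma hasDerivAt_wave_update (z : ℝ) (u : ι → ℝ) (i α k : ι) :
    HasDerivAt (fun t => wave z (update u k t) i α) (partialWave z u i α k) (u k) := by
  have : Nonempty ι := ⟨i⟩
  have hS := sum_exp_neg_pos u
  have hx := hasDerivAt_update_apply u k
  have hA := (((hx α).const_mul z).exp.const_mul 2).div_const √(1 - 4 * z ^ 2)
  have hE := (((hx i).fun_add (hx α)).fun_neg.div_const 2).exp
  have hD : HasDerivAt (fun t => ∑ m, exp (-update u k t m)) (-exp (-u k)) (u k) := by
    refine (HasDerivAt.fun_sum fun m _ => (hx m).fun_neg.exp).congr_deriv ?_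
    simp only [update_eq_self, mul_neg, mul_ite, mul_one, mul_zero, sum_neg_distrib, sum_ite_eq',
      mem_univ, if_true]
  refine (hA.mul ((hE.fun_div hD (by simpa using hS.ne')).const_add _)).congr_deriv ?_
  simp only [update_eq_self, partialWave, wave]
  generalize (if α = k then (1 : ℝ) else 0) = a
  generalize (if i = k then (1 : ℝ) else 0) = b
  field_simp
  ring

lemma partialWave_of_ne {i k : ι} (hki : k ≠ i) (z : ℝ) (u : ι → ℝ) (α : ι) :
    partialWave z u i α k = exp (-(u i + u k) / 2) / (∑ m, exp (-u m)) * wave z u k α := by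
  have : Nonempty ι := ⟨i⟩
  have hS := (sum_exp_neg_pos u).ne'
  simp only [partialWave, wave, if_neg hki.symm, exp_neg_add_div_two]
  rw [exp_neg_eq_mul_self_half (u k)]
  rcases eq_or_ne α k with rfl | hαk
  · simp only [if_true, if_neg hki.symm]
    field_simp
    ring
  · simp only [if_neg hαk, if_neg hαk.symm]
    field_simp
    ring

lemma sum_partialWave (z : ℝ) (u : ι → ℝ) (i α : ι) :
    ∑ k, partialWave z u i α k = z * wave z u i α := by
  have : Nonempty ι := ⟨i⟩
  have hS := (sum_exp_neg_pos u).ne'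
  simp only [partialWave, sum_add_distrib, ← mul_sum, ← sum_mul, sum_sub_distrib, ← sum_div,
    sum_ite_eq, mem_univ, if_true, div_self hS]
  ring

lemma sum_wave_neg_mul_wave {z : ℝ} (hz : |z| < 1 / 2) (u : ι → ℝ) (i j : ι) :
    ∑ α, wave (-z) u i α * wave z u j α = if i = j then 1 else 0 := by
  have : Nonempty ι := ⟨i⟩
  have hS := (sum_exp_neg_pos u).ne'
  have hz2 : 0 < 1 - 4 * z ^ 2 := by
    nlinarith [abs_lt.mp hz]
  let p : ι → ℝ := fun m => exp (-u m / 2)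
  have hp : ∑ m, p m * p m = ∑ m, exp (-u m) :=
    sum_congr rfl fun m _ => (exp_neg_eq_mul_self_half (u m)).symm
  have hterm : ∀ α, wave (-z) u i α * wave z u j α = 4 / (1 - 4 * z ^ 2) *
      (((-z - 1 / 2) * (if i = α then 1 else 0) + p i * p α / ∑ m, exp (-u m)) *
        ((z - 1 / 2) * (if j = α then 1 else 0) + p j * p α / ∑ m, exp (-u m))) := by
    intro α
    have hprefactor : 2 * exp (-z * u α) / √(1 - 4 * z ^ 2) * (2 * exp (z * u α) / √(1 - 4 * z ^ 2))
        = 4 / (1 - 4 * z ^ 2) := by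
      calc _ = 4 * (exp (-z * u α) * exp (z * u α)) / (√(1 - 4 * z ^ 2) * √(1 - 4 * z ^ 2)) := by
            ring
        _ = 4 / (1 - 4 * z ^ 2) := by
            rw [← exp_add, neg_mul, neg_add_cancel, exp_zero, mul_one, mul_self_sqrt hz2.le]
    rw [wave, wave, neg_sq, mul_mul_mul_comm, hprefactor, exp_neg_add_div_two, exp_neg_add_div_two]
  rw [sum_congr rfl fun α _ => hterm α, ← mul_sum, sum_delta_add_outer_mul p hp hS]
  field_simp
  ring

end WaveFunction

open WaveFunction in
/-- With `D(u) = ∑ₖ e^{-uₖ}`, `γ_ij = e^{-(uᵢ+uⱼ)/2}/D` for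
`i ≠ j`, and the wave functions
`Ψ_iα(u,z) = (2e^{z u_α}/√(1-4z²)) [ (z - ½) δ_iα + e^{-(uᵢ+u_α)/2}/D ]`
for `|z| < 1/2`, one has: (i) `∂Ψ_iα/∂uⱼ = γ_ij Ψ_jα` for `i ≠ j`;
(ii) `∑ₖ ∂Ψ_iα/∂uₖ = z Ψ_iα`; and (iii) the normalization
`∑_α Ψ_iα(u,-z) Ψ_jα(u,z) = δ_ij`. -/
theorem stmt18 {n : ℕ} (z : ℝ) (hz : |z| < 1 / 2)
    (γ : (Fin n → ℝ) → Fin n → Fin n → ℝ)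
    (hγ : ∀ u : Fin n → ℝ, ∀ i j : Fin n, i ≠ j →
      γ u i j = Real.exp (-(u i + u j) / 2) / ∑ k, Real.exp (-u k))
    (Ψ : ℝ → (Fin n → ℝ) → Fin n → Fin n → ℝ)
    (hΨ : ∀ w : ℝ, ∀ u : Fin n → ℝ, ∀ i α : Fin n,
      Ψ w u i α =
        2 * Real.exp (w * u α) / Real.sqrt (1 - 4 * w ^ 2) *
          ((w - 1 / 2) * (if i = α then 1 else 0)
            + Real.exp (-(u i + u α) / 2) / ∑ k, Real.exp (-u k))) :
    ∀ u : Fin n → ℝ,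
      (∀ i α : Fin n,
        ∃ D : Fin n → ℝ,
          (∀ k : Fin n,
            HasDerivAt (fun t : ℝ => Ψ z (Function.update u k t) i α) (D k) (u k)) ∧
          (∀ k : Fin n, k ≠ i → D k = γ u i k * Ψ z u k α) ∧
          ∑ k, D k = z * Ψ z u i α) ∧
      (∀ i j : Fin n,
        ∑ α, Ψ (-z) u i α * Ψ z u j α = if i = j then 1 else 0) := by
  have hwave : Ψ = wave := by
    funext w u i α
    exact hΨ w u i α
  subst hwave
  intro u
  refine ⟨fun i α => ⟨partialWave z u i α, fun k => hasDerivAt_wave_update z u i α k,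
    fun k hk => ?_, sum_partialWave z u i α⟩, sum_wave_neg_mul_wave hz u⟩
  rw [hγ u i k hk.symm]
  exact partialWave_of_ne hk z u α
end
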